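/- Every word over Σ₂ = {0,1} of length at least 9 contains at least one of the words 0000, 0110, 1001, 1111, 00100, 01010, 01110, 10001, 10101, 11011 as a subword. -/
import Mathlib

private def P (t : List (Fin 2)) : Prop :=
    ([0, 0, 0, 0] : List (Fin 2)) <:+: t ∨ ([0, 1, 1, 0] : List (Fin 2)) <:+: t ∨
    ([1, 0, 0, 1] : List (Fin 2)) <:+: t ∨ ([1, 1, 1, 1] : List (Fin 2)) <:+: t ∨
    ([0, 0, 1, 0, 0] : List (Fin 2)) <:+: t ∨ ([0, 1, 0, 1, 0] : List (Fin 2)) <:+: t ∨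
    ([0, 1, 1, 1, 0] : List (Fin 2)) <:+: t ∨ ([1, 0, 0, 0, 1] : List (Fin 2)) <:+: t ∨
    ([1, 0, 1, 0, 1] : List (Fin 2)) <:+: t ∨ ([1, 1, 0, 1, 1] : List (Fin 2)) <:+: t

private lemma key : ∀ a b c d e f g h i : Fin 2, P [a, b, c, d, e, f, g, h, i] := by
  unfold P
  decide

private lemma P_mono {t w : List (Fin 2)} (h : t <:+: w) (ht : P t) : P w := by
  unfold P at ht ⊢
  rcases ht with h1|h1|h1|h1|h1|h1|h1|h1|h1|h1 <;>
    [exact Or.inl (h1.trans h);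
     exact Or.inr (Or.inl (h1.trans h));
     exact Or.inr (Or.inr (Or.inl (h1.trans h)));
     exact Or.inr (Or.inr (Or.inr (Or.inl (h1.trans h))));
     exact Or.inr (Or.inr (Or.inr (Or.inr (Or.inl (h1.trans h)))));
     exact Or.inr (Or.inr (Or.inr (Or.inr (Or.inr (Or.inl (h1.trans h))))));
     exact Or.inr (Or.inr (Or.inr (Or.inr (Or.inr (Or.inr (Or.inl (h1.trans h)))))));
     exact Or.inr (Or.inr (Or.inr (Or.inr (Or.inr (Or.inr (Or.inr (Or.inl (h1.trans h))))))));
     exact Or.inr (Or.inr (Or.inr (Or.inr (Or.inr (Or.inr (Or.inr (Or.inr (Or.inl (h1.trans h)))))))));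
     exact Or.inr (Or.inr (Or.inr (Or.inr (Or.inr (Or.inr (Or.inr (Or.inr (Or.inr (h1.trans h)))))))))]

/-- Every binary word of length at least 9 contains one of
0000, 0110, 1001, 1111, 00100, 01010, 01110, 10001, 10101, 11011 as a subword. -/
theorem stmt_9 (w : List (Fin 2)) (hw : 9 ≤ w.length) :
    ([0, 0, 0, 0] : List (Fin 2)) <:+: w ∨ ([0, 1, 1, 0] : List (Fin 2)) <:+: w ∨
    ([1, 0, 0, 1] : List (Fin 2)) <:+: w ∨ ([1, 1, 1, 1] : List (Fin 2)) <:+: w ∨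
    ([0, 0, 1, 0, 0] : List (Fin 2)) <:+: w ∨ ([0, 1, 0, 1, 0] : List (Fin 2)) <:+: w ∨
    ([0, 1, 1, 1, 0] : List (Fin 2)) <:+: w ∨ ([1, 0, 0, 0, 1] : List (Fin 2)) <:+: w ∨
    ([1, 0, 1, 0, 1] : List (Fin 2)) <:+: w ∨ ([1, 1, 0, 1, 1] : List (Fin 2)) <:+: w := by
  have ht : (w.take 9).length = 9 := by
    rw [List.length_take]; omega
  have hinf : w.take 9 <:+: w := (List.take_prefix 9 w).isInfix
  have hP : P (w.take 9) := by
    match t : w.take 9, ht with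
    | [a, b, c, d, e, f, g, h, i], _ => exact key a b c d e f g h i
  exact P_mono hinf hP
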